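/- Let F be a field, let a, b, c, d, k13, k14, k47, k78, k25, k57 ∈ F, and let ε1, ε2, ε3, ε4, ε5, ε7, ε8 be Booleans. Define vectors in F²: f̃1 = (a,b) if ε1 else 0; f̃2 = (c,d) if ε2 else 0; f̃3 = k13·f̃1 if ε3 else 0; f̃4 = k14·f̃1 if ε4 else 0; f̃5 = k25·f̃2 if ε5 else 0; f̃7 = k47·f̃4 + k57·f̃5 if ε7 else 0; f̃8 = k78·f̃7 if ε8 else 0. Then the 2×2 matrix with columns f̃3 and f̃8 is invertible if and only if ε1, ε2, ε3, ε5, ε7, ε8 are all true, k13 ≠ 0, k25 ≠ 0, k57 ≠ 0, k78 ≠ 0, and a·d − b·c ≠ 0. -/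
import Mathlib


/- Active global encoding kernels of the butterfly network with channel erasures:
`fᵢt` is the usual linear-combination value when the Boolean `eᵢ` (channel `eᵢ`
successful) is true, and the zero vector otherwise. The source kernel is
`K_s = [[a,c],[b,d]]`, i.e. `f1 = (a,b)ᵀ`, `f2 = (c,d)ᵀ`. -/

def f1t {F : Type*} [Field F] (a b : F) (e1 : Bool) : Fin 2 → F :=
  if e1 then ![a, b] else 0

def f2t {F : Type*} [Field F] (c d : F) (e2 : Bool) : Fin 2 → F :=
  if e2 then ![c, d] else 0

def f3t {F : Type*} [Field F] (a b k13 : F) (e1 e3 : Bool) : Fin 2 → F :=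
  if e3 then k13 • f1t a b e1 else 0

def f4t {F : Type*} [Field F] (a b k14 : F) (e1 e4 : Bool) : Fin 2 → F :=
  if e4 then k14 • f1t a b e1 else 0

def f5t {F : Type*} [Field F] (c d k25 : F) (e2 e5 : Bool) : Fin 2 → F :=
  if e5 then k25 • f2t c d e2 else 0

def f6t {F : Type*} [Field F] (c d k26 : F) (e2 e6 : Bool) : Fin 2 → F :=
  if e6 then k26 • f2t c d e2 else 0

def f7t {F : Type*} [Field F] (a b c d k14 k47 k25 k57 : F) (e1 e2 e4 e5 e7 : Bool) :
    Fin 2 → F :=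
  if e7 then k47 • f4t a b k14 e1 e4 + k57 • f5t c d k25 e2 e5 else 0

def f8t {F : Type*} [Field F] (a b c d k14 k47 k78 k25 k57 : F) (e1 e2 e4 e5 e7 e8 : Bool) :
    Fin 2 → F :=
  if e8 then k78 • f7t a b c d k14 k47 k25 k57 e1 e2 e4 e5 e7 else 0

def f9t {F : Type*} [Field F] (a b c d k14 k47 k79 k25 k57 : F) (e1 e2 e4 e5 e7 e9 : Bool) :
    Fin 2 → F :=
  if e9 then k79 • f7t a b c d k14 k47 k25 k57 e1 e2 e4 e5 e7 else 0

/- The erased decoding matrix at sink `t₁`: columns `f̃3` and `f̃8`. -/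
def Ft1t {F : Type*} [Field F] (a b c d k13 k14 k47 k78 k25 k57 : F)
    (e1 e2 e3 e4 e5 e7 e8 : Bool) : Matrix (Fin 2) (Fin 2) F :=
  !![f3t a b k13 e1 e3 0, f8t a b c d k14 k47 k78 k25 k57 e1 e2 e4 e5 e7 e8 0;
     f3t a b k13 e1 e3 1, f8t a b c d k14 k47 k78 k25 k57 e1 e2 e4 e5 e7 e8 1]

/- The erased decoding matrix at sink `t₂`: columns `f̃6` and `f̃9`. -/
def Ft2t {F : Type*} [Field F] (a b c d k14 k47 k79 k25 k57 k26 : F)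
    (e1 e2 e4 e5 e6 e7 e9 : Bool) : Matrix (Fin 2) (Fin 2) F :=
  !![f6t c d k26 e2 e6 0, f9t a b c d k14 k47 k79 k25 k57 e1 e2 e4 e5 e7 e9 0;
     f6t c d k26 e2 e6 1, f9t a b c d k14 k47 k79 k25 k57 e1 e2 e4 e5 e7 e9 1]

/- STATEMENT 6: the erased decoding matrix at sink `t₁` (columns `f̃3`, `f̃8`) is
invertible iff channels `e1, e2, e3, e5, e7, e8` are all successful,
`k13 ≠ 0`, `k25 ≠ 0`, `k57 ≠ 0`, `k78 ≠ 0`, and `a*d - b*c ≠ 0`. -/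
theorem butterfly_erased_Ft1_invertible_iff
    (F : Type*) [Field F] (a b c d k13 k14 k47 k78 k25 k57 : F)
    (e1 e2 e3 e4 e5 e7 e8 : Bool) :
    IsUnit (Ft1t a b c d k13 k14 k47 k78 k25 k57 e1 e2 e3 e4 e5 e7 e8) ↔
      e1 = true ∧ e2 = true ∧ e3 = true ∧ e5 = true ∧ e7 = true ∧ e8 = true ∧
      k13 ≠ 0 ∧ k25 ≠ 0 ∧ k57 ≠ 0 ∧ k78 ≠ 0 ∧ a * d - b * c ≠ 0 := by
  rw [Matrix.isUnit_iff_isUnit_det, isUnit_iff_ne_zero, Ft1t, Matrix.det_fin_two_of]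
  cases e1 <;> cases e2 <;> cases e3 <;> cases e4 <;> cases e5 <;> cases e7 <;> cases e8 <;>
    simp [f3t, f8t, f7t, f5t, f4t, f2t, f1t]
  all_goals try ring
  all_goals
    constructor
    · intro h
      refine ⟨fun hk => h ?_, fun hk => h ?_, fun hk => h ?_, fun hk => h ?_, fun hk => h ?_⟩
      · subst hk; ring
      · subst hk; ring
      · subst hk; ring
      · subst hk; ring
      · linear_combination (k13 * (k78 * (k57 * k25))) * hk
    · rintro ⟨h1, h2, h3, h4, h5⟩ hh
      apply h5
      apply mul_left_cancel₀ (mul_ne_zero h1 (mul_ne_zero h4 (mul_ne_zero h3 h2)))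
      rw [mul_zero]
      linear_combination hh
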